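/- arXiv:2111.14385 — 8 statements merged into one kernel-verified Lean document; each statement's English description precedes it below -/
import Mathlib

section
/- Let F be an m×k complex matrix and B an m×l complex matrix with rank(Bᴴ·F) = rank(F), and let Z be a Moore–Penrose pseudoinverse of Bᴴ·F. Then F·(Z·Bᴴ)·F = F. Likewise, if H is an n×k complex matrix and D an n×l' complex matrix with rank(Hᴴ·D) = rank(H), and Z' is a Moore–Penrose pseudoinverse of Hᴴ·D, then Hᴴ·(D·Z')·Hᴴ = Hᴴ. -/
/-!
If `rank (G * F) = rank F`, then `ker (G * F) = ker F`, since one kernel contains the other and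
they have the same dimension. For any inner inverse `Z` of `A = G * F`, the columns of `1 - Z * A`
lie in `ker A = ker F`, so `F * Z * G * F = F`. The second identity is the transposed form of the
first, using `rank Hᴴ = rank H` over `ℂ`.
-/

open Matrix

/-- `Z` is a Moore–Penrose pseudoinverse of `M`: it satisfies the four Penrose equations. -/
def IsMoorePenrose {m n : ℕ} (M : Matrix (Fin m) (Fin n) ℂ)
    (Z : Matrix (Fin n) (Fin m) ℂ) : Prop :=
  M * Z * M = M ∧ Z * M * Z = Z ∧ (M * Z)ᴴ = M * Z ∧ (Z * M)ᴴ = Z * M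

namespace Matrix

variable {K : Type*} [Field K] {l m n p : Type*} [Fintype m] [Fintype n]

theorem ker_mulVecLin_mul_eq_of_rank_eq {G : Matrix l m K} {F : Matrix m n K}
    (hr : (G * F).rank = F.rank) : LinearMap.ker (G * F).mulVecLin = LinearMap.ker F.mulVecLin := by
  have hle : LinearMap.ker F.mulVecLin ≤ LinearMap.ker (G * F).mulVecLin := by
    rw [mulVecLin_mul]
    exact LinearMap.ker_le_ker_comp _ _
  have hF := LinearMap.finrank_range_add_finrank_ker F.mulVecLin
  have hGF := LinearMap.finrank_range_add_finrank_ker (G * F).mulVecLin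
  rw [Matrix.rank, Matrix.rank] at hr
  exact (Submodule.eq_of_le_of_finrank_eq hle (by omega)).symm

theorem mul_eq_zero_of_mul_mul_eq_zero_of_rank_eq [Fintype p] {G : Matrix l m K}
    {F : Matrix m n K} (hr : (G * F).rank = F.rank) {X : Matrix n p K} (hX : G * F * X = 0) :
    F * X = 0 := by
  refine ext_iff_mulVec.2 fun v => ?_
  have hv : X *ᵥ v ∈ LinearMap.ker (G * F).mulVecLin := by
    simp only [LinearMap.mem_ker, mulVecLin_apply, mulVec_mulVec, hX, zero_mulVec]
  rw [ker_mulVecLin_mul_eq_of_rank_eq hr] at hv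
  simpa [mulVec_mulVec] using hv

theorem mul_mul_mul_eq_self_of_rank_mul_left [Fintype l] {G : Matrix l m K} {F : Matrix m n K}
    {Z : Matrix n l K} (hr : (G * F).rank = F.rank) (hZ : G * F * Z * (G * F) = G * F) :
    F * (Z * G) * F = F := by
  classical
  have h : G * F * (1 - Z * (G * F)) = 0 := by
    rw [Matrix.mul_sub, Matrix.mul_one, ← Matrix.mul_assoc, hZ, sub_self]
  have h' := mul_eq_zero_of_mul_mul_eq_zero_of_rank_eq hr h
  rw [Matrix.mul_sub, Matrix.mul_one, sub_eq_zero] at h'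
  simpa only [Matrix.mul_assoc] using h'.symm

theorem mul_mul_mul_eq_self_of_rank_mul_right [Fintype l] {F : Matrix m n K} {G : Matrix n l K}
    {Z : Matrix l m K} (hr : (F * G).rank = F.rank) (hZ : F * G * Z * (F * G) = F * G) :
    F * (G * Z) * F = F := by
  have hr' : (Gᵀ * Fᵀ).rank = Fᵀ.rank := by
    rw [← transpose_mul, rank_transpose, rank_transpose, hr]
  have hZ' : Gᵀ * Fᵀ * Zᵀ * (Gᵀ * Fᵀ) = Gᵀ * Fᵀ := by
    simpa only [transpose_mul, Matrix.mul_assoc] using congrArg transpose hZ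
  simpa only [transpose_mul, Matrix.mul_assoc, transpose_transpose] using
    congrArg transpose (mul_mul_mul_eq_self_of_rank_mul_left hr' hZ')

end Matrix

theorem generalized_inverse_equations
    {m n k l l' : ℕ}
    (F : Matrix (Fin m) (Fin k) ℂ) (B : Matrix (Fin m) (Fin l) ℂ)
    (H : Matrix (Fin n) (Fin k) ℂ) (D : Matrix (Fin n) (Fin l') ℂ)
    (Z : Matrix (Fin k) (Fin l) ℂ) (Z' : Matrix (Fin l') (Fin k) ℂ)
    (hBF : (Bᴴ * F).rank = F.rank) (hZ : IsMoorePenrose (Bᴴ * F) Z)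
    (hHD : (Hᴴ * D).rank = H.rank) (hZ' : IsMoorePenrose (Hᴴ * D) Z') :
    F * (Z * Bᴴ) * F = F ∧ Hᴴ * (D * Z') * Hᴴ = Hᴴ := by
  open scoped ComplexOrder in
  have hH : (Hᴴ * D).rank = Hᴴ.rank := hHD.trans (rank_conjTranspose H).symm
  exact ⟨mul_mul_mul_eq_self_of_rank_mul_left hBF hZ.1,
    mul_mul_mul_eq_self_of_rank_mul_right hH hZ'.1⟩
end

section
/- Let A be an m×n complex matrix, let F and Y be m×k complex matrices, and let H and X be n×k complex matrices. Suppose Yᴴ·F = I_k and Hᴴ·X = I_k, the column space of F equals the column space of A, and the column space of H equals the column space of Aᴴ. Then A = F·Yᴴ·A·X·Hᴴ (the reconstruction equation). -/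
/-!
Since the columns of `A` lie in the column space of `F`, we can write `A = F N`, and then the
left inverse `Yᴴ` of `F` gives `F Yᴴ A = F (Yᴴ F) N = A`. Applying the same argument to `Aᴴ`,
whose columns lie in the column space of `H`, and conjugating back gives `A X Hᴴ = A`.
-/

open Matrix

namespace Matrix

variable {R l m n : Type*} [CommSemiring R] [Fintype l] [Fintype n]

theorem exists_eq_mul_of_range_mulVecLin_le {A : Matrix m n R} {F : Matrix m l R}
    (h : LinearMap.range A.mulVecLin ≤ LinearMap.range F.mulVecLin) :
    ∃ N : Matrix l n R, A = F * N := by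
  classical
  have hcol : ∀ j, ∃ v, F *ᵥ v = A.col j := fun j => h ⟨Pi.single j 1, mulVec_single_one A j⟩
  choose v hv using hcol
  refine ⟨of fun a j => v j a, ?_⟩
  ext i j
  rw [← col_apply A j i, ← hv j]
  rfl

theorem mul_mul_eq_of_mul_eq_one_of_range_le [Fintype m] [DecidableEq l]
    {A : Matrix m n R} {F : Matrix m l R} {G : Matrix l m R} (hGF : G * F = 1)
    (h : LinearMap.range A.mulVecLin ≤ LinearMap.range F.mulVecLin) : F * G * A = A := by
  obtain ⟨N, rfl⟩ := exists_eq_mul_of_range_mulVecLin_le h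
  rw [Matrix.mul_assoc, ← Matrix.mul_assoc G, hGF, Matrix.one_mul]

theorem mul_mul_conjTranspose_eq_of_mul_eq_one_of_range_le [StarRing R] [Fintype m]
    [DecidableEq l] {A : Matrix m n R} {H X : Matrix n l R} (hHX : Hᴴ * X = 1)
    (h : LinearMap.range Aᴴ.mulVecLin ≤ LinearMap.range H.mulVecLin) : A * X * Hᴴ = A := by
  have hXH : Xᴴ * H = 1 := by
    rw [← conjTranspose_conjTranspose H, ← conjTranspose_mul, hHX, conjTranspose_one]
  apply conjTranspose_injective
  rw [conjTranspose_mul, conjTranspose_mul, conjTranspose_conjTranspose, ← Matrix.mul_assoc]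
  exact mul_mul_eq_of_mul_eq_one_of_range_le hXH h

end Matrix

theorem reconstruction_equation
    {m n k : ℕ}
    (A : Matrix (Fin m) (Fin n) ℂ)
    (F Y : Matrix (Fin m) (Fin k) ℂ) (H X : Matrix (Fin n) (Fin k) ℂ)
    (hYF : Yᴴ * F = 1) (hHX : Hᴴ * X = 1)
    (hF : LinearMap.range F.mulVecLin = LinearMap.range A.mulVecLin)
    (hH : LinearMap.range H.mulVecLin = LinearMap.range Aᴴ.mulVecLin) :
    A = F * Yᴴ * A * X * Hᴴ := by
  rw [mul_mul_eq_of_mul_eq_one_of_range_le hYF hF.ge,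
    mul_mul_conjTranspose_eq_of_mul_eq_one_of_range_le hHX hH.ge]
end

section
/- Let A be an m×n complex matrix, let F and Y be m×k complex matrices with F·Yᴴ·F = F, and let H and X be n×k complex matrices with Hᴴ·X·Hᴴ = Hᴴ. Then the equation F·G·Hᴴ = A has a solution G (a k×k complex matrix) if and only if F·Yᴴ·A·X·Hᴴ = A. -/
open Matrix

theorem Matrix.exists_mul_mul_eq_iff_of_inner_inverses
    {l o p q R : Type*} [Fintype l] [Fintype o] [Fintype p] [Fintype q] [NonUnitalSemiring R]
    {F : Matrix l p R} {F' : Matrix p l R} {K : Matrix q o R} {K' : Matrix o q R}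
    (hF : F * F' * F = F) (hK : K * K' * K = K) (A : Matrix l o R) :
    (∃ G : Matrix p q R, F * G * K = A) ↔ F * F' * A * K' * K = A := by
  constructor
  · rintro ⟨G, rfl⟩
    calc F * F' * (F * G * K) * K' * K = (F * F' * F) * G * (K * K' * K) := by
          simp only [Matrix.mul_assoc]
      _ = F * G * K := by rw [hF, hK]
  · intro h
    exact ⟨F' * A * K', by simpa only [Matrix.mul_assoc] using h⟩

theorem solvability_iff_reconstruction
    {m n k : ℕ}
    (A : Matrix (Fin m) (Fin n) ℂ)
    (F Y : Matrix (Fin m) (Fin k) ℂ) (H X : Matrix (Fin n) (Fin k) ℂ)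
    (hF : F * Yᴴ * F = F) (hH : Hᴴ * X * Hᴴ = Hᴴ) :
    (∃ G : Matrix (Fin k) (Fin k) ℂ, F * G * Hᴴ = A) ↔
      F * Yᴴ * A * X * Hᴴ = A :=
  exists_mul_mul_eq_iff_of_inner_inverses hF hH A
end

section
/- Let A be an m×n complex matrix, let F and Y be m×k complex matrices with F·Yᴴ·F = F, and let H and X be n×k complex matrices with Hᴴ·X·Hᴴ = Hᴴ. Suppose moreover that F·Yᴴ·A·X·Hᴴ = A. Then for every k×k complex matrix G, one has F·G·Hᴴ = A if and only if there exists a k×k complex matrix W such that G = Yᴴ·A·X + W − Yᴴ·F·W·Hᴴ·X. -/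
/-!
With `F Y F = F` and `K X K = K`, the map `W ↦ W - Y F W K X` lands in the kernel of
`G ↦ F G K`, and the reconstruction hypothesis says that `Y A X` is a particular solution.
Conversely, a solution `G` is its own parameter, since then `Y F G K X = Y A X`.
-/

open Matrix

namespace Matrix

variable {R : Type*} [Ring R] {m n k l : Type*} [Fintype m] [Fintype n] [Fintype k] [Fintype l]

theorem mul_sandwich_mul_eq_of_inner_inverse {F : Matrix m k R} {Y : Matrix k m R}
    {K : Matrix l n R} {X : Matrix n l R} (hF : F * Y * F = F) (hK : K * X * K = K)
    (W : Matrix k l R) : F * (Y * F * W * K * X) * K = F * W * K := by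
  calc F * (Y * F * W * K * X) * K = (F * Y * F) * W * (K * X * K) := by
        simp only [Matrix.mul_assoc]
    _ = F * W * K := by rw [hF, hK]

theorem mul_mul_eq_iff_exists_of_inner_inverse {A : Matrix m n R} {F : Matrix m k R}
    {Y : Matrix k m R} {K : Matrix l n R} {X : Matrix n l R} (hF : F * Y * F = F)
    (hK : K * X * K = K) (hRec : F * Y * A * X * K = A) (G : Matrix k l R) :
    F * G * K = A ↔ ∃ W : Matrix k l R, G = Y * A * X + W - Y * F * W * K * X := by
  constructor
  · rintro rfl
    exact ⟨G, by simp only [Matrix.mul_assoc]; abel⟩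
  · rintro ⟨W, rfl⟩
    have hPart : F * (Y * A * X) * K = A := by simpa only [Matrix.mul_assoc] using hRec
    rw [Matrix.mul_sub, Matrix.sub_mul, Matrix.mul_add, Matrix.add_mul, hPart,
      mul_sandwich_mul_eq_of_inner_inverse hF hK]
    abel

end Matrix

theorem general_solution_characterization
    {m n k : ℕ}
    (A : Matrix (Fin m) (Fin n) ℂ)
    (F Y : Matrix (Fin m) (Fin k) ℂ) (H X : Matrix (Fin n) (Fin k) ℂ)
    (hF : F * Yᴴ * F = F) (hH : Hᴴ * X * Hᴴ = Hᴴ)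
    (hRec : F * Yᴴ * A * X * Hᴴ = A) :
    ∀ G : Matrix (Fin k) (Fin k) ℂ,
      F * G * Hᴴ = A ↔
        ∃ W : Matrix (Fin k) (Fin k) ℂ,
          G = Yᴴ * A * X + W - Yᴴ * F * W * Hᴴ * X :=
  mul_mul_eq_iff_exists_of_inner_inverse hF hH hRec
end

section
/- Let A be an m×n complex matrix, F an m×k complex matrix, and H an n×k complex matrix. Let Z_F be a Moore–Penrose pseudoinverse of F and Z_H a Moore–Penrose pseudoinverse of Hᴴ. Then the equation F·G·Hᴴ = A has a solution G (a k×k complex matrix) if and only if F·Z_F·A·Z_H·Hᴴ = A; and in that case, for every k×k complex matrix G, one has F·G·Hᴴ = A if and only if there exists a k×k complex matrix W such that G = Z_F·A·Z_H + W − Z_F·F·W·Hᴴ·Z_H. -/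
/-!
If `F Z_F F = F` and `K Z_K K = K`, then `X ↦ F Z_F X Z_K K` fixes every matrix of the form
`F G K`. Hence `A` is of that form iff it is fixed, in which case `Z_F A Z_K` is a solution; and
`W ↦ W - Z_F F W K Z_K` maps onto the solutions of `F G K = 0`, each solution `G` being the image
of itself.
-/

open Matrix

namespace Matrix

variable {R : Type*} [Ring R] {m k l n : Type*} [Fintype m] [Fintype k] [Fintype l] [Fintype n]
  {F : Matrix m k R} {ZF : Matrix k m R} {K : Matrix l n R} {ZK : Matrix n l R}

theorem mul_mul_mul_mul_mul_eq_of_mul_mul_self (hF : F * ZF * F = F) (hK : K * ZK * K = K)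
    (G : Matrix k l R) : F * ZF * (F * G * K) * ZK * K = F * G * K :=
  calc F * ZF * (F * G * K) * ZK * K = (F * ZF * F) * G * (K * ZK * K) := by
        simp only [Matrix.mul_assoc]
    _ = F * G * K := by rw [hF, hK, Matrix.mul_assoc]

theorem exists_mul_mul_eq_iff_of_mul_mul_self (hF : F * ZF * F = F) (hK : K * ZK * K = K)
    (A : Matrix m n R) : (∃ G : Matrix k l R, F * G * K = A) ↔ F * ZF * A * ZK * K = A := by
  constructor
  · rintro ⟨G, rfl⟩
    exact mul_mul_mul_mul_mul_eq_of_mul_mul_self hF hK G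
  · intro hA
    exact ⟨ZF * A * ZK, by simpa only [Matrix.mul_assoc] using hA⟩

theorem mul_mul_eq_iff_exists_of_mul_mul_self (hF : F * ZF * F = F) (hK : K * ZK * K = K)
    {A : Matrix m n R} (hA : F * ZF * A * ZK * K = A) (G : Matrix k l R) :
    F * G * K = A ↔ ∃ W : Matrix k l R, G = ZF * A * ZK + W - ZF * F * W * K * ZK := by
  constructor
  · rintro rfl
    refine ⟨G, ?_⟩
    simp only [Matrix.mul_assoc]
    abel
  · rintro ⟨W, rfl⟩
    have hparticular : F * (ZF * A * ZK) * K = A := by simpa only [Matrix.mul_assoc] using hA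
    have hhomogeneous : F * (ZF * F * W * K * ZK) * K = F * W * K := by
      simpa only [Matrix.mul_assoc] using mul_mul_mul_mul_mul_eq_of_mul_mul_self hF hK W
    rw [Matrix.mul_sub, Matrix.mul_add, Matrix.sub_mul, Matrix.add_mul, hparticular, hhomogeneous]
    abel

end Matrix

theorem penrose_solvability_and_general_solution
    {m n k : ℕ}
    (A : Matrix (Fin m) (Fin n) ℂ)
    (F : Matrix (Fin m) (Fin k) ℂ) (H : Matrix (Fin n) (Fin k) ℂ)
    (ZF : Matrix (Fin k) (Fin m) ℂ) (hZF : IsMoorePenrose F ZF)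
    (ZH : Matrix (Fin n) (Fin k) ℂ) (hZH : IsMoorePenrose Hᴴ ZH) :
    ((∃ G : Matrix (Fin k) (Fin k) ℂ, F * G * Hᴴ = A) ↔
        F * ZF * A * ZH * Hᴴ = A) ∧
    (F * ZF * A * ZH * Hᴴ = A →
      ∀ G : Matrix (Fin k) (Fin k) ℂ,
        F * G * Hᴴ = A ↔
          ∃ W : Matrix (Fin k) (Fin k) ℂ,
            G = ZF * A * ZH + W - ZF * F * W * Hᴴ * ZH) :=
  ⟨exists_mul_mul_eq_iff_of_mul_mul_self hZF.1 hZH.1 A,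
    fun hA => mul_mul_eq_iff_exists_of_mul_mul_self hZF.1 hZH.1 hA⟩
end

section
/- Let A be an m×n complex matrix, B an m×l complex matrix with rank(Bᴴ·A) = rank(A), and let Z be a Moore–Penrose pseudoinverse of Bᴴ·A; set Y' = Z·Bᴴ (an n×m matrix). If the vector c ∈ ℂ^m lies in the column space of A, then for every x ∈ ℂ^n one has A·x = c if and only if there exists y ∈ ℂ^n with x = Y'·c + (I_n − Y'·A)·y. -/
open Matrix

/-!
The rank condition makes `ker (Bᴴ A) = ker A`, since one kernel contains the other and
rank–nullity gives them the same dimension. The first Penrose equation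
`(Bᴴ A) Z (Bᴴ A) = Bᴴ A` says that every column of `1 - Z Bᴴ A` lies in `ker (Bᴴ A) = ker A`,
so `A (Z Bᴴ) A = A`: the matrix `Z Bᴴ` is an inner inverse of `A`. For any inner inverse `G`
of `A` and `c = A x₀`, one has `A G c = A G A x₀ = c` and `A (1 - G A) = 0`, which gives the
general solution of `A x = c`.
-/

namespace Matrix

variable {m n p R : Type*} [Fintype n]

theorem ker_mulVecLin_mul_eq_of_rank_eq_s10 [Fintype m] [Field R] (N : Matrix p m R)
    (A : Matrix m n R) (h : (N * A).rank = A.rank) :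
    LinearMap.ker (N * A).mulVecLin = LinearMap.ker A.mulVecLin := by
  have hle : LinearMap.ker A.mulVecLin ≤ LinearMap.ker (N * A).mulVecLin := by
    rw [mulVecLin_mul]
    exact LinearMap.ker_le_ker_comp _ _
  refine (Submodule.eq_of_le_of_finrank_le hle ?_).symm
  have hA := A.mulVecLin.finrank_range_add_finrank_ker
  have hNA := (N * A).mulVecLin.finrank_range_add_finrank_ker
  rw [rank, rank] at h
  omega

theorem mul_mul_eq_of_ker_le [CommRing R] [Fintype p] {M : Matrix p n R} {A : Matrix m n R}
    {G : Matrix n p R} (hker : LinearMap.ker M.mulVecLin ≤ LinearMap.ker A.mulVecLin)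
    (hG : M * G * M = M) : A * G * M = A := by
  refine ext_iff_mulVec.mpr fun v => ?_
  have hv : v - (G * M) *ᵥ v ∈ LinearMap.ker M.mulVecLin := by
    simp [mulVec_sub, ← Matrix.mul_assoc, hG]
  have hAv := hker hv
  simp only [LinearMap.mem_ker, mulVecLin_apply, mulVec_sub, mulVec_mulVec, sub_eq_zero] at hAv
  rw [Matrix.mul_assoc, hAv]

theorem mulVec_eq_iff_exists_of_mul_mul_eq [Fintype m] [CommRing R] [DecidableEq n]
    {A : Matrix m n R} {G : Matrix n m R}
    (hG : A * G * A = A) {c : m → R} (hc : c ∈ LinearMap.range A.mulVecLin) (x : n → R) :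
    A *ᵥ x = c ↔ ∃ y, x = G *ᵥ c + (1 - G * A) *ᵥ y := by
  constructor
  · rintro rfl
    exact ⟨x, by rw [sub_mulVec, one_mulVec, mulVec_mulVec]; abel⟩
  · obtain ⟨x₀, rfl⟩ := hc
    rintro ⟨y, rfl⟩
    simp only [mulVecLin_apply, mulVec_add, sub_mulVec, one_mulVec, mulVec_sub, mulVec_mulVec,
      ← Matrix.mul_assoc, hG, sub_self, add_zero]

end Matrix

theorem vector_equation_general_solution
    {m n l : ℕ}
    (A : Matrix (Fin m) (Fin n) ℂ) (B : Matrix (Fin m) (Fin l) ℂ)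
    (hBA : (Bᴴ * A).rank = A.rank)
    (Z : Matrix (Fin n) (Fin l) ℂ) (hZ : IsMoorePenrose (Bᴴ * A) Z)
    (c : Fin m → ℂ) (hc : c ∈ LinearMap.range A.mulVecLin) :
    ∀ x : Fin n → ℂ,
      A.mulVec x = c ↔
        ∃ y : Fin n → ℂ,
          x = (Z * Bᴴ).mulVec c + ((1 : Matrix (Fin n) (Fin n) ℂ) - Z * Bᴴ * A).mulVec y := by
  have hker := ker_mulVecLin_mul_eq_of_rank_eq_s10 Bᴴ A hBA
  have hinner : A * (Z * Bᴴ) * A = A := by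
    simpa only [Matrix.mul_assoc] using mul_mul_eq_of_ker_le hker.le hZ.1
  exact mulVec_eq_iff_exists_of_mul_mul_eq hinner hc
end

section
/- (Exactness of the generalized Nyström method) Let A be an m×n complex matrix with rank(A) = k, and let Ω_c be an n×k complex matrix and Ω_r an m×k complex matrix such that the k×k matrix Ω_rᴴ·A·Ω_c is invertible. Then A = (A·Ω_c)·(Ω_rᴴ·A·Ω_c)⁻¹·(Ω_rᴴ·A). -/
/-!
Since `Ωrᴴ A Ωc` is an invertible `k × k` matrix, `A Ωc` has rank at least `k = rank A`; as its
column space lies in that of `A`, the two column spaces coincide, so `A = A Ωc X` for some `X`.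
Then `A Ωc (Ωrᴴ A Ωc)⁻¹ Ωrᴴ A = A Ωc (Ωrᴴ A Ωc)⁻¹ (Ωrᴴ A Ωc) X = A Ωc X = A`.
-/

open Matrix

theorem LinearMap.exists_comp_eq_of_range_le {R M N P : Type*} [Semiring R]
    [AddCommMonoid M] [AddCommMonoid N] [AddCommMonoid P] [Module R M] [Module R N] [Module R P]
    [Module.Projective R P] (f : M →ₗ[R] N) (g : P →ₗ[R] N) (hle : range g ≤ range f) :
    ∃ h : P →ₗ[R] M, f ∘ₗ h = g := by
  obtain ⟨h, hh⟩ := Module.projective_lifting_property f.rangeRestrict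
    (g.codRestrict (range f) fun x => hle (mem_range_self g x)) f.surjective_rangeRestrict
  exact ⟨h, ext fun x => congrArg Subtype.val (LinearMap.congr_fun hh x)⟩

namespace Matrix

variable {K R : Type*} {m n p : Type*} [Fintype n] [Fintype p]

theorem exists_mul_mul_eq_of_rank_mul_eq [Field K] (A : Matrix m n K) (B : Matrix n p K)
    (hrank : (A * B).rank = A.rank) : ∃ X : Matrix p n K, A * B * X = A := by
  classical
  have hrange : LinearMap.range (A * B).mulVecLin = LinearMap.range A.mulVecLin := by
    refine Submodule.eq_of_le_of_finrank_eq ?_ hrank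
    rw [mulVecLin_mul]
    exact LinearMap.range_comp_le_range _ _
  obtain ⟨h, hh⟩ := LinearMap.exists_comp_eq_of_range_le _ _ hrange.ge
  refine ⟨LinearMap.toMatrix' h, toLin'.injective ?_⟩
  rwa [toLin'_mul, toLin'_toMatrix']

theorem rank_mul_eq_of_isUnit_mul_mul [Fintype m] [DecidableEq p] [Field K] {A : Matrix m n K}
    (B : Matrix n p K) (C : Matrix p m K) (hA : A.rank = Fintype.card p)
    (hCAB : IsUnit (C * A * B)) :
    (A * B).rank = A.rank := by
  refine le_antisymm (rank_mul_le_left A B) ?_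
  calc A.rank = (C * A * B).rank := by rw [hA, rank_of_isUnit _ hCAB]
    _ ≤ (A * B).rank := by rw [Matrix.mul_assoc]; exact rank_mul_le_right C (A * B)

theorem eq_mul_inv_mul_of_mul_mul_eq [Fintype m] [DecidableEq p] [CommRing R]
    {A : Matrix m n R} {B : Matrix n p R} {X : Matrix p n R} (C : Matrix p m R)
    (hX : A * B * X = A) (hCAB : IsUnit (C * A * B)) :
    A = A * B * (C * A * B)⁻¹ * (C * A) := by
  calc A = A * B * ((C * A * B)⁻¹ * (C * A * B) * X) := by
        rw [nonsing_inv_mul _ ((isUnit_iff_isUnit_det _).mp hCAB), Matrix.one_mul, hX]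
    _ = A * B * (C * A * B)⁻¹ * (C * (A * B * X)) := by simp only [Matrix.mul_assoc]
    _ = A * B * (C * A * B)⁻¹ * (C * A) := by rw [hX]

end Matrix

theorem generalized_nystrom_exact
    {m n k : ℕ}
    (A : Matrix (Fin m) (Fin n) ℂ) (hA : A.rank = k)
    (Ωc : Matrix (Fin n) (Fin k) ℂ) (Ωr : Matrix (Fin m) (Fin k) ℂ)
    (hUnit : IsUnit (Ωrᴴ * A * Ωc)) :
    A = (A * Ωc) * (Ωrᴴ * A * Ωc)⁻¹ * (Ωrᴴ * A) := by
  have hrank : (A * Ωc).rank = A.rank :=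
    rank_mul_eq_of_isUnit_mul_mul Ωc Ωrᴴ (by rw [hA, Fintype.card_fin]) hUnit
  obtain ⟨X, hX⟩ := exists_mul_mul_eq_of_rank_mul_eq A Ωc hrank
  exact eq_mul_inv_mul_of_mul_mul_eq Ωrᴴ hX hUnit
end

section
/- (CUR-type reconstruction) Let A be an m×n complex matrix, let C be an m×c complex matrix whose column space equals the column space of A, and let R be an r×n complex matrix such that the column space of Rᴴ equals the column space of Aᴴ. If Z_C is a Moore–Penrose pseudoinverse of C and Z_R is a Moore–Penrose pseudoinverse of R, then A = C·Z_C·A·Z_R·R. -/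
/-! Since `C * ZC * C = C`, the matrix `C * ZC` fixes the column space of `C`, which contains the
columns of `A`; so `C * ZC * A = A`. Dually `R * ZR * R = R` makes `ZR * R` fix the row space of `R`,
which contains the rows of `A`; so `A * ZR * R = A`. -/

open Matrix

namespace Matrix

variable {R : Type*} [CommSemiring R] {k m n : Type*} [Fintype k] [Fintype m] [Fintype n]

theorem mul_eq_self_of_range_le [DecidableEq n] {M : Matrix m m R} {C : Matrix m k R}
    {A : Matrix m n R} (hMC : M * C = C)
    (hA : LinearMap.range A.mulVecLin ≤ LinearMap.range C.mulVecLin) : M * A = A := by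
  refine toLin'.injective (LinearMap.ext fun x => ?_)
  obtain ⟨y, hy⟩ := hA ⟨x, rfl⟩
  change C *ᵥ y = A *ᵥ x at hy
  change (M * A) *ᵥ x = A *ᵥ x
  rw [← mulVec_mulVec, ← hy, mulVec_mulVec, hMC]

theorem mul_eq_self_of_range_conjTranspose_le [StarRing R] [DecidableEq m] {M : Matrix n n R}
    {C : Matrix k n R} {A : Matrix m n R} (hCM : C * M = C)
    (hA : LinearMap.range Aᴴ.mulVecLin ≤ LinearMap.range Cᴴ.mulVecLin) : A * M = A := by
  have hMC : Mᴴ * Cᴴ = Cᴴ := by rw [← conjTranspose_mul, hCM]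
  simpa [← conjTranspose_mul] using congrArg conjTranspose (mul_eq_self_of_range_le hMC hA)

end Matrix

theorem cur_type_reconstruction
    {m n c r : ℕ}
    (A : Matrix (Fin m) (Fin n) ℂ)
    (C : Matrix (Fin m) (Fin c) ℂ)
    (hC : LinearMap.range C.mulVecLin = LinearMap.range A.mulVecLin)
    (R : Matrix (Fin r) (Fin n) ℂ)
    (hR : LinearMap.range Rᴴ.mulVecLin = LinearMap.range Aᴴ.mulVecLin)
    (ZC : Matrix (Fin c) (Fin m) ℂ) (hZC : IsMoorePenrose C ZC)
    (ZR : Matrix (Fin n) (Fin r) ℂ) (hZR : IsMoorePenrose R ZR) :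
    A = C * ZC * A * ZR * R := by
  have hcol : C * ZC * A = A := mul_eq_self_of_range_le hZC.1 hC.ge
  have hrow : A * (ZR * R) = A :=
    mul_eq_self_of_range_conjTranspose_le (by rw [← Matrix.mul_assoc, hZR.1]) hR.ge
  rw [Matrix.mul_assoc _ ZR R, hcol, hrow]
end
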